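/- arXiv:2309.03773 — 8 statements merged into one kernel-verified Lean document; each statement's English description precedes it below -/
import Mathlib

section
/- Let δ : Matrix ε (α ⊕ β) ℝ, r : ε → ℝ, and Δ = δᵀ * δ, and suppose the block Δ₁₁ is invertible. Fix boundary values x_B : β → ℝ and define x_U : α → ℝ by x_U = -Δ₁₁⁻¹.mulVec (Δ₁₂.mulVec x_B) + Δ₁₁⁻¹.mulVec ((δᵀ.mulVec r) ∘ Sum.inl). Then for every u : α → ℝ, E(Sum.elim x_U x_B) ≤ E(Sum.elim u x_B); i.e., x_U minimizes the energy E among all assignments to the interior indices with the boundary fixed at x_B. (Theorem 1: harmonic extension minimizes the generalized Dirichlet energy.) -/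
open Matrix BigOperators

/-- Theorem 1 (harmonic extension minimizes the generalized Dirichlet energy). -/
theorem harmonic_extension_minimizes_energy
    {α β ε : Type*} [Fintype α] [Fintype β] [Fintype ε]
    [DecidableEq α] [DecidableEq β]
    (δ : Matrix ε (α ⊕ β) ℝ) (r : ε → ℝ)
    (Δ : Matrix (α ⊕ β) (α ⊕ β) ℝ) (hΔ : Δ = δᵀ * δ)
    (hinv : IsUnit (Δ.toBlocks₁₁).det)
    (x_B : β → ℝ) (x_U : α → ℝ)
    (hxU : x_U = -((Δ.toBlocks₁₁)⁻¹.mulVec ((Δ.toBlocks₁₂).mulVec x_B))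
        + (Δ.toBlocks₁₁)⁻¹.mulVec ((δᵀ.mulVec r) ∘ Sum.inl)) :
    ∀ u : α → ℝ,
      ∑ e, ((δ.mulVec (Sum.elim x_U x_B)) e - r e) ^ 2
        ≤ ∑ e, ((δ.mulVec (Sum.elim u x_B)) e - r e) ^ 2 := by
  intro u
  set y : (α ⊕ β) → ℝ := Sum.elim x_U x_B with hy
  set d : (α ⊕ β) → ℝ := Sum.elim (fun a => u a - x_U a) 0 with hd
  have hz : Sum.elim u x_B = y + d := by
    funext i; cases i <;> simp [hy, hd]
  -- normal equations on the interior
  have hkey : ∀ a, (δᵀ.mulVec (δ.mulVec y - r)) (Sum.inl a) = 0 := by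
    intro a
    have h1 : δᵀ.mulVec (δ.mulVec y) = Δ.mulVec y := by
      rw [hΔ, ← mulVec_mulVec]
    have h3 : Δ.toBlocks₁₁.mulVec x_U
        = -(Δ.toBlocks₁₂.mulVec x_B) + (δᵀ.mulVec r) ∘ Sum.inl := by
      rw [hxU]
      simp only [Matrix.mulVec_add, Matrix.mulVec_neg, mulVec_mulVec,
        ← Matrix.mul_assoc, Matrix.mul_nonsing_inv _ hinv, Matrix.one_mul,
        Matrix.one_mulVec]
    have h2 : (Δ.mulVec y) (Sum.inl a)
        = (Δ.toBlocks₁₁.mulVec x_U) a + (Δ.toBlocks₁₂.mulVec x_B) a := by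
      simp [Matrix.mulVec, dotProduct, Fintype.sum_sum_type,
        Matrix.toBlocks₁₁, Matrix.toBlocks₁₂, hy]
    have h4 := congrArg (fun v => v a) h3
    simp only [Pi.add_apply, Pi.neg_apply, Function.comp_apply] at h4
    rw [Matrix.mulVec_sub, Pi.sub_apply, h1, h2, h4]
    ring
  have hcross : ∑ e, ((δ.mulVec y) e - r e) * (δ.mulVec d) e = 0 := by
    have : ∑ e, ((δ.mulVec y) e - r e) * (δ.mulVec d) e
        = d ⬝ᵥ (δᵀ.mulVec (δ.mulVec y - r)) := by
      rw [Matrix.dotProduct_mulVec, Matrix.vecMul_transpose]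
      rw [dotProduct_comm, dotProduct]
      congr 1
    rw [this, dotProduct, Fintype.sum_sum_type]
    simp [hd, hkey]
  rw [hz, Matrix.mulVec_add]
  have expand : ∑ e, ((δ.mulVec y + δ.mulVec d) e - r e) ^ 2
      = ∑ e, (((δ.mulVec y) e - r e) ^ 2
          + 2 * (((δ.mulVec y) e - r e) * (δ.mulVec d) e)
          + ((δ.mulVec d) e) ^ 2) := by
    apply Finset.sum_congr rfl
    intro e _
    simp only [Pi.add_apply]
    ring
  rw [expand, Finset.sum_add_distrib, Finset.sum_add_distrib, ← Finset.mul_sum,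
    hcross, mul_zero, add_zero]
  have : (0:ℝ) ≤ ∑ e, ((δ.mulVec d) e) ^ 2 :=
    Finset.sum_nonneg fun e _ => sq_nonneg _
  linarith
end

section
/- Let δ : Matrix ε (α ⊕ β) ℝ, r : ε → ℝ, and Δ = δᵀ * δ, and suppose the block Δ₁₁ is invertible. Fix boundary values x_B : β → ℝ. If u : α → ℝ satisfies E(Sum.elim u x_B) ≤ E(Sum.elim v x_B) for every v : α → ℝ, then u = -Δ₁₁⁻¹.mulVec (Δ₁₂.mulVec x_B) + Δ₁₁⁻¹.mulVec ((δᵀ.mulVec r) ∘ Sum.inl). In other words, the energy-minimizing harmonic extension of x_B to the interior indices is unique and given by the closed-form expression. (Uniqueness part of Theorem 1.) -/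
open Matrix BigOperators

/-- Uniqueness part of Theorem 1: the energy-minimizing harmonic extension of the
boundary values is unique and given by the closed-form expression. -/
theorem harmonic_extension_unique
    {α β ε : Type*} [Fintype α] [Fintype β] [Fintype ε]
    [DecidableEq α] [DecidableEq β]
    (δ : Matrix ε (α ⊕ β) ℝ) (r : ε → ℝ)
    (Δ : Matrix (α ⊕ β) (α ⊕ β) ℝ) (hΔ : Δ = δᵀ * δ)
    (hinv : IsUnit (Δ.toBlocks₁₁).det)
    (x_B : β → ℝ) (u : α → ℝ)
    (hmin : ∀ v : α → ℝ,
      ∑ e, ((δ.mulVec (Sum.elim u x_B)) e - r e) ^ 2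
        ≤ ∑ e, ((δ.mulVec (Sum.elim v x_B)) e - r e) ^ 2) :
    u = -((Δ.toBlocks₁₁)⁻¹.mulVec ((Δ.toBlocks₁₂).mulVec x_B))
        + (Δ.toBlocks₁₁)⁻¹.mulVec ((δᵀ.mulVec r) ∘ Sum.inl) := by
  classical
  set A : Matrix ε α ℝ := δ.submatrix id Sum.inl with hA
  set C : Matrix ε β ℝ := δ.submatrix id Sum.inr with hC
  have hsplit : ∀ v : α → ℝ,
      δ.mulVec (Sum.elim v x_B) = A.mulVec v + C.mulVec x_B := by
    intro v
    funext e
    simp [Matrix.mulVec, dotProduct, Fintype.sum_sum_type, hA, hC,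
      Matrix.submatrix_apply]
  set b : ε → ℝ := r - C.mulVec x_B with hb
  have hf : ∀ v : α → ℝ,
      ∑ e, ((δ.mulVec (Sum.elim v x_B)) e - r e) ^ 2
        = ∑ e, (A.mulVec v e - b e) ^ 2 := by
    intro v
    apply Finset.sum_congr rfl
    intro e _
    rw [hsplit v]
    simp [hb]
    ring
  -- first-order optimality: ∀ w, ∑ e, A.mulVec w e * (A.mulVec u e - b e) = 0
  have hfo : ∀ w : α → ℝ, ∑ e, A.mulVec w e * (A.mulVec u e - b e) = 0 := by
    intro w
    set s := ∑ e, A.mulVec w e * (A.mulVec u e - b e) with hs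
    set q := ∑ e, (A.mulVec w e) ^ 2 with hq
    have hq0 : 0 ≤ q := Finset.sum_nonneg fun e _ => sq_nonneg _
    have key : ∀ t : ℝ, 0 ≤ 2 * t * s + t ^ 2 * q := by
      intro t
      have h := hmin (u + t • w)
      rw [hf, hf] at h
      have hexp : ∑ e, (A.mulVec (u + t • w) e - b e) ^ 2
          = (∑ e, (A.mulVec u e - b e) ^ 2) + (2 * t * s + t ^ 2 * q) := by
        simp only [hs, hq, Matrix.mulVec_add, Matrix.mulVec_smul, Pi.add_apply,
          Pi.smul_apply, smul_eq_mul, Finset.mul_sum]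
        rw [← Finset.sum_add_distrib, ← Finset.sum_add_distrib]
        apply Finset.sum_congr rfl
        intro e _
        ring
      rw [hexp] at h
      linarith
    by_contra hs0
    have hq1 : (0:ℝ) < q + 1 := by linarith
    set t : ℝ := -s / (q + 1) with ht
    have hts : t * (q + 1) = -s := by rw [ht]; field_simp
    have h1 := key t
    have htne : t ≠ 0 := by
      intro h
      rw [h, zero_mul] at hts
      exact hs0 (by linarith)
    have ht2 : 0 < t * t := mul_self_pos.mpr htne
    have hs' : s = -(t * (q + 1)) := by linarith
    have hrw : 2 * t * s + t ^ 2 * q = -((t * t) * (q + 2)) := by rw [hs']; ring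
    rw [hrw] at h1
    have : 0 < (t * t) * (q + 2) := mul_pos ht2 (by linarith)
    linarith
  -- vector form: Aᵀ(Au - b) = 0
  have hvec : Aᵀ.mulVec (A.mulVec u - b) = 0 := by
    funext a
    have := hfo (Pi.single a 1)
    simp only [Matrix.mulVec_single, mul_one] at this
    simpa [Matrix.mulVec, dotProduct, Matrix.transpose_apply] using this
  have h11 : Δ.toBlocks₁₁ = Aᵀ * A := by
    subst hΔ
    ext a a'
    simp [Matrix.toBlocks₁₁, Matrix.mul_apply, hA, Matrix.submatrix_apply]
  have h12 : Δ.toBlocks₁₂ = Aᵀ * C := by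
    subst hΔ
    ext a bb
    simp [Matrix.toBlocks₁₂, Matrix.mul_apply, hA, hC, Matrix.submatrix_apply]
  have hr : (δᵀ.mulVec r) ∘ Sum.inl = Aᵀ.mulVec r := by
    funext a
    simp [Matrix.mulVec, dotProduct, hA, Matrix.transpose_apply]
  have heq : (Δ.toBlocks₁₁).mulVec u
      = -((Δ.toBlocks₁₂).mulVec x_B) + (δᵀ.mulVec r) ∘ Sum.inl := by
    rw [h11, h12, hr, ← Matrix.mulVec_mulVec, ← Matrix.mulVec_mulVec]
    have : A.mulVec u = (A.mulVec u - b) + r - C.mulVec x_B := by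
      simp [hb]
      abel
    rw [this]
    rw [Matrix.mulVec_sub, Matrix.mulVec_add, hvec]
    abel
  have hInv : (Δ.toBlocks₁₁)⁻¹ * Δ.toBlocks₁₁ = 1 := Matrix.nonsing_inv_mul _ hinv
  calc u = ((Δ.toBlocks₁₁)⁻¹ * Δ.toBlocks₁₁).mulVec u := by rw [hInv, Matrix.one_mulVec]
    _ = (Δ.toBlocks₁₁)⁻¹.mulVec ((Δ.toBlocks₁₁).mulVec u) := by
        rw [Matrix.mulVec_mulVec]
    _ = _ := by
        rw [heq, Matrix.mulVec_add, Matrix.mulVec_neg]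
end

section
/- Let δ : Matrix ε (α ⊕ β) ℝ, r : ε → ℝ, and Δ = δᵀ * δ. Suppose Δ₁₁ is positive definite and 2•(1 : Matrix α α ℝ) − Δ₁₁ is positive definite (i.e., all eigenvalues of Δ₁₁ lie in the open interval (0,2)). Fix x_B : β → ℝ and an arbitrary initialization u⁰ : α → ℝ, and define the sequence u : ℕ → (α → ℝ) by u 0 = u⁰ and u (k) = ((1 : Matrix α α ℝ) − Δ₁₁).mulVec (u (k−1)) − Δ₁₂.mulVec x_B + (δᵀ.mulVec r) ∘ Sum.inl. Then the sequence u k converges, as k → ∞, to -Δ₁₁⁻¹.mulVec (Δ₁₂.mulVec x_B) + Δ₁₁⁻¹.mulVec ((δᵀ.mulVec r) ∘ Sum.inl). (Proposition 1: the iterative diffusion scheme converges to the closed-form harmonic extension.) -/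
open Matrix BigOperators Filter Topology

/-- Proposition 1: the iterative diffusion scheme converges to the
closed-form harmonic extension. -/
theorem diffusion_iteration_converges
    {α β ε : Type*} [Fintype α] [Fintype β] [Fintype ε]
    [DecidableEq α] [DecidableEq β]
    (δ : Matrix ε (α ⊕ β) ℝ) (r : ε → ℝ)
    (Δ : Matrix (α ⊕ β) (α ⊕ β) ℝ) (hΔ : Δ = δᵀ * δ)
    (hpos : (Δ.toBlocks₁₁).PosDef)
    (hpos2 : (2 • (1 : Matrix α α ℝ) - Δ.toBlocks₁₁).PosDef)
    (x_B : β → ℝ) (u₀ : α → ℝ)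
    (u : ℕ → (α → ℝ)) (hu0 : u 0 = u₀)
    (hrec : ∀ k : ℕ, u (k + 1)
      = ((1 : Matrix α α ℝ) - Δ.toBlocks₁₁).mulVec (u k)
        - (Δ.toBlocks₁₂).mulVec x_B + (δᵀ.mulVec r) ∘ Sum.inl) :
    Tendsto u atTop
      (𝓝 (-((Δ.toBlocks₁₁)⁻¹.mulVec ((Δ.toBlocks₁₂).mulVec x_B))
        + (Δ.toBlocks₁₁)⁻¹.mulVec ((δᵀ.mulVec r) ∘ Sum.inl))) := by
  set A : Matrix α α ℝ := Δ.toBlocks₁₁ with hAdef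
  set M : Matrix α α ℝ := 1 - A with hMdef
  have hAsym : A.IsHermitian := hpos.1
  have hM : M.IsHermitian := Matrix.isHermitian_one.sub hAsym
  -- the fixed point
  set c : α → ℝ :=
    -((Δ.toBlocks₁₂).mulVec x_B) + (δᵀ.mulVec r) ∘ Sum.inl with hcdef
  set ustar : α → ℝ := A⁻¹.mulVec c with hustardef
  have htarget :
      (-((Δ.toBlocks₁₁)⁻¹.mulVec ((Δ.toBlocks₁₂).mulVec x_B))
        + (Δ.toBlocks₁₁)⁻¹.mulVec ((δᵀ.mulVec r) ∘ Sum.inl)) = ustar := by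
    simp [hustardef, hcdef, hAdef, Matrix.mulVec_add, Matrix.mulVec_neg]
  have hdet : IsUnit A.det := isUnit_iff_ne_zero.2 hpos.det_pos.ne'
  have hAfix : A.mulVec ustar = c := by
    rw [hustardef, Matrix.mulVec_mulVec, Matrix.mul_nonsing_inv _ hdet,
      Matrix.one_mulVec]
  -- the error sequence
  set e : ℕ → (α → ℝ) := fun k => u k - ustar with hedef
  have herec : ∀ k, e (k + 1) = M.mulVec (e k) := by
    intro k
    have h1 : M.mulVec (e k) = M.mulVec (u k) - M.mulVec ustar := by
      simp [hedef, Matrix.mulVec_sub]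
    have h2 : M.mulVec ustar = ustar - c := by
      rw [hMdef, Matrix.sub_mulVec, Matrix.one_mulVec, hAfix]
    rw [h1, h2, hedef]
    simp only [hrec k, hcdef]
    abel
  have hek : ∀ k, e k = (M ^ k).mulVec (e 0) := by
    intro k
    induction k with
    | zero => simp
    | succ k ih =>
      rw [herec k, ih, pow_succ', Matrix.mulVec_mulVec]
  -- eigenvalue bounds
  have hbound : ∀ i, |hM.eigenvalues i| < 1 := by
    intro i
    set v : α → ℝ := ⇑(hM.eigenvectorBasis i) with hvdef
    set μ : ℝ := hM.eigenvalues i with hμdef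
    have hv0 : v ≠ 0 := by
      have := hM.eigenvectorBasis.orthonormal.ne_zero i
      intro h
      apply this
      ext j
      exact congrFun h j
    have hMv : M.mulVec v = μ • v := hM.mulVec_eigenvectorBasis i
    have hAv : A.mulVec v = (1 - μ) • v := by
      have : A.mulVec v = v - M.mulVec v := by
        rw [hMdef, Matrix.sub_mulVec, Matrix.one_mulVec]
        abel
      rw [this, hMv, sub_smul, one_smul]
    have hvv : 0 < dotProduct v v := by
      rcases lt_or_eq_of_le (dotProduct_self_star_nonneg v) with h | h
      · simpa using h
      · exact absurd (by simpa using dotProduct_self_star_eq_zero.1 h.symm) hv0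
    have h1 : 0 < (1 - μ) * dotProduct v v := by
      have := hpos.dotProduct_mulVec_pos hv0
      rwa [hAv, dotProduct_smul, star_trivial, smul_eq_mul] at this
    have h2 : 0 < (1 + μ) * dotProduct v v := by
      have := hpos2.dotProduct_mulVec_pos hv0
      have hA2 : (2 • (1 : Matrix α α ℝ) - A).mulVec v = (1 + μ) • v := by
        rw [two_smul, Matrix.sub_mulVec, Matrix.add_mulVec, Matrix.one_mulVec, hAv]
        ext j
        simp [Pi.smul_apply, smul_eq_mul]
        ring
      rwa [hA2, dotProduct_smul, star_trivial, smul_eq_mul] at this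
    have hμlt : μ < 1 := by nlinarith
    have hμgt : -1 < μ := by nlinarith
    exact abs_lt.2 ⟨hμgt, hμlt⟩
  -- eigenvector expansion
  have hpowv : ∀ i k, (M ^ k).mulVec ⇑(hM.eigenvectorBasis i)
      = (hM.eigenvalues i ^ k) • ⇑(hM.eigenvectorBasis i) := by
    intro i k
    induction k with
    | zero => simp
    | succ k ih =>
      rw [pow_succ', ← Matrix.mulVec_mulVec, ih, Matrix.mulVec_smul,
        hM.mulVec_eigenvectorBasis i, smul_smul, mul_comm, ← pow_succ']
  set b := hM.eigenvectorBasis with hbdef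
  set w : α → ℝ := fun i => b.repr (WithLp.toLp 2 (e 0)) i with hwdef
  have hsum : e 0 = ∑ i, w i • ⇑(b i) := by
    have := congrArg WithLp.ofLp (b.sum_repr (WithLp.toLp 2 (e 0)))
    simpa [WithLp.ofLp_sum] using this.symm
  have hetend : Tendsto e atTop (𝓝 0) := by
    have key : e = fun k => ∑ i, (w i * hM.eigenvalues i ^ k) • ⇑(b i) := by
      funext k
      rw [hek k, hsum, ← Matrix.mulVecLin_apply, map_sum]
      refine Finset.sum_congr rfl fun i _ => ?_
      rw [_root_.map_smul, Matrix.mulVecLin_apply, hpowv i k, smul_smul]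
    rw [key]
    have : Tendsto (fun k => ∑ i, (w i * hM.eigenvalues i ^ k) • ⇑(b i))
        atTop (𝓝 (∑ i : α, (0 : α → ℝ))) := by
      refine tendsto_finset_sum _ fun i _ => ?_
      have h1 : Tendsto (fun k => w i * hM.eigenvalues i ^ k) atTop (𝓝 0) := by
        have := tendsto_pow_atTop_nhds_zero_of_abs_lt_one (hbound i)
        simpa using this.const_mul (w i)
      have := h1.smul_const (⇑(b i) : α → ℝ)
      simpa using this
    simpa using this
  have : Tendsto u atTop (𝓝 (0 + ustar)) := by
    have : Tendsto (fun k => e k + ustar) atTop (𝓝 (0 + ustar)) :=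
      hetend.add_const ustar
    simpa [hedef] using this
  rw [htarget]
  simpa using this
end

section
/- Let δ : Matrix ε (α ⊕ β) ℝ, r : ε → ℝ, and Δ = δᵀ * δ, and suppose the block Δ₁₁ is invertible. Fix x_B : β → ℝ and define the affine map T : (α → ℝ) → (α → ℝ) by T u = ((1 : Matrix α α ℝ) − Δ₁₁).mulVec u − Δ₁₂.mulVec x_B + (δᵀ.mulVec r) ∘ Sum.inl. Then T has exactly one fixed point, namely u* = -Δ₁₁⁻¹.mulVec (Δ₁₂.mulVec x_B) + Δ₁₁⁻¹.mulVec ((δᵀ.mulVec r) ∘ Sum.inl). (The steady state of the diffusion iteration is the closed-form harmonic extension.) -/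
open Matrix

/-- The steady state of the diffusion iteration is the closed-form harmonic
extension: the affine map `T` has exactly one fixed point, namely
`u* = -Δ₁₁⁻¹ Δ₁₂ x_B + Δ₁₁⁻¹ (δᵀ r)_U`. -/
theorem diffusion_fixed_point_unique
    {α β ε : Type*} [Fintype α] [Fintype β] [Fintype ε]
    [DecidableEq α] [DecidableEq β]
    (δ : Matrix ε (α ⊕ β) ℝ) (r : ε → ℝ)
    (Δ : Matrix (α ⊕ β) (α ⊕ β) ℝ) (hΔ : Δ = δᵀ * δ)
    (hinv : IsUnit (Δ.toBlocks₁₁).det)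
    (x_B : β → ℝ)
    (T : (α → ℝ) → (α → ℝ))
    (hT : ∀ u, T u = ((1 : Matrix α α ℝ) - Δ.toBlocks₁₁).mulVec u
      - (Δ.toBlocks₁₂).mulVec x_B + (δᵀ.mulVec r) ∘ Sum.inl) :
    ∀ u : α → ℝ, T u = u ↔
      u = -((Δ.toBlocks₁₁)⁻¹.mulVec ((Δ.toBlocks₁₂).mulVec x_B))
        + (Δ.toBlocks₁₁)⁻¹.mulVec ((δᵀ.mulVec r) ∘ Sum.inl) := by
  intro u
  set A := Δ.toBlocks₁₁ with hA
  set B := Δ.toBlocks₁₂ with hB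
  set c := (δᵀ.mulVec r) ∘ Sum.inl with hc
  have hAinv : A⁻¹ * A = 1 := nonsing_inv_mul A hinv
  have key : T u = u ↔ A.mulVec u = -(B.mulVec x_B) + c := by
    rw [hT u]
    constructor
    · intro h
      have := congrArg (fun v => v - u + A.mulVec u + B.mulVec x_B) h
      simp only [sub_mulVec, one_mulVec] at this ⊢
      funext i
      have := congrFun this i
      simp at this ⊢
      linarith
    · intro h
      simp only [sub_mulVec, one_mulVec]
      funext i
      have := congrFun h i
      simp [Pi.add_apply, Pi.neg_apply] at this ⊢
      linarith
  rw [key]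
  constructor
  · intro h
    have : A⁻¹.mulVec (A.mulVec u) = A⁻¹.mulVec (-(B.mulVec x_B) + c) := by rw [h]
    rwa [mulVec_mulVec, hAinv, one_mulVec, mulVec_add, mulVec_neg] at this
  · intro h
    rw [h, mulVec_add, mulVec_neg]
    simp [mulVec_mulVec, mul_nonsing_inv A hinv, ← Matrix.mul_assoc]
end

section
/- Let Δ : Matrix (α ⊕ β) (α ⊕ β) ℝ be symmetric and positive semidefinite with the block Δ₁₁ invertible, and fix y : β → ℝ. Define x_U : α → ℝ by x_U = -Δ₁₁⁻¹.mulVec (Δ₁₂.mulVec y). Then for every u : α → ℝ, the quadratic form satisfies (Sum.elim x_U y) ⬝ᵥ Δ.mulVec (Sum.elim x_U y) ≤ (Sum.elim u y) ⬝ᵥ Δ.mulVec (Sum.elim u y); i.e., the harmonic extension x_U = -Δ[U,U]⁻¹Δ[U,B]y minimizes the Dirichlet energy among all vectors agreeing with y on the boundary. (Classical harmonic extension minimizes the Dirichlet energy.) -/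
/-!
Write `w = (x_U, y)` and `u' = (u, y) = w + z` with `z = (u - x_U, 0)`. The defining equation
`Δ₁₁ x_U + Δ₁₂ y = 0` says that `Δ w` vanishes on the interior, where `z` lives, so the cross
terms of the quadratic form vanish and `u'ᵀ Δ u' = wᵀ Δ w + zᵀ Δ z ≥ wᵀ Δ w`.
-/

open Matrix

namespace Matrix

section QuadraticForm

variable {ι R : Type*} [Fintype ι]

theorem IsSymm.dotProduct_mulVec_add_of_dotProduct_mulVec_eq_zero [CommRing R]
    {A : Matrix ι ι R} (hA : A.IsSymm) {w z : ι → R} (h : z ⬝ᵥ A *ᵥ w = 0) :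
    (w + z) ⬝ᵥ A *ᵥ (w + z) = w ⬝ᵥ A *ᵥ w + z ⬝ᵥ A *ᵥ z := by
  have h' : w ⬝ᵥ A *ᵥ z = 0 := by
    rw [dotProduct_mulVec, ← mulVec_transpose, hA.eq, dotProduct_comm, h]
  rw [mulVec_add, add_dotProduct, dotProduct_add, dotProduct_add, h, h', add_zero, zero_add]

theorem PosSemidef.dotProduct_mulVec_le_of_dotProduct_mulVec_eq_zero [CommRing R]
    [PartialOrder R] [StarRing R] [TrivialStar R] [IsOrderedAddMonoid R]
    {A : Matrix ι ι R} (hA : A.PosSemidef) {w z : ι → R} (h : z ⬝ᵥ A *ᵥ w = 0) :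
    w ⬝ᵥ A *ᵥ w ≤ (w + z) ⬝ᵥ A *ᵥ (w + z) := by
  have hsymm : A.IsSymm := isHermitian_iff_isSymm.mp hA.1
  rw [hsymm.dotProduct_mulVec_add_of_dotProduct_mulVec_eq_zero h]
  simpa using hA.dotProduct_mulVec_nonneg z

end QuadraticForm

section Blocks

variable {α β R : Type*} [Fintype α] [Fintype β]

theorem mulVec_sumElim_comp_inl [NonUnitalNonAssocSemiring R] (A : Matrix (α ⊕ β) (α ⊕ β) R)
    (x : α → R) (y : β → R) :
    (A *ᵥ Sum.elim x y) ∘ Sum.inl = A.toBlocks₁₁ *ᵥ x + A.toBlocks₁₂ *ᵥ y := by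
  conv_lhs => rw [← fromBlocks_toBlocks A, fromBlocks_mulVec]
  rfl

theorem sumElim_zero_dotProduct [NonUnitalNonAssocSemiring R] (v : α → R) (f : α ⊕ β → R) :
    Sum.elim v 0 ⬝ᵥ f = v ⬝ᵥ f ∘ Sum.inl := by
  conv_lhs => rw [← Sum.elim_comp_inl_inr f, sumElim_dotProduct_sumElim, zero_dotProduct,
    add_zero]

variable [DecidableEq α] [CommRing R]

noncomputable def harmonicExtension (A : Matrix (α ⊕ β) (α ⊕ β) R) (y : β → R) : α → R :=
  -(A.toBlocks₁₁⁻¹ *ᵥ A.toBlocks₁₂ *ᵥ y)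

theorem mulVec_sumElim_harmonicExtension_comp_inl {A : Matrix (α ⊕ β) (α ⊕ β) R}
    (hA : IsUnit A.toBlocks₁₁.det) (y : β → R) :
    (A *ᵥ Sum.elim (A.harmonicExtension y) y) ∘ Sum.inl = 0 := by
  rw [mulVec_sumElim_comp_inl, harmonicExtension, mulVec_neg, mulVec_mulVec,
    mul_nonsing_inv _ hA, one_mulVec, neg_add_cancel]

end Blocks

end Matrix

theorem classical_harmonic_extension_minimizes_general
    {α β : Type*} [Fintype α] [Fintype β] [DecidableEq α]
    (Δ : Matrix (α ⊕ β) (α ⊕ β) ℝ) (hpsd : Δ.PosSemidef)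
    (hinv : IsUnit (Δ.toBlocks₁₁).det)
    (y : β → ℝ) (x_U : α → ℝ)
    (hxU : x_U = -((Δ.toBlocks₁₁)⁻¹.mulVec ((Δ.toBlocks₁₂).mulVec y))) :
    ∀ u : α → ℝ,
      (Sum.elim x_U y) ⬝ᵥ Δ.mulVec (Sum.elim x_U y)
        ≤ (Sum.elim u y) ⬝ᵥ Δ.mulVec (Sum.elim u y) := by
  intro u
  have hharmonic : (Δ *ᵥ Sum.elim x_U y) ∘ Sum.inl = 0 :=
    hxU ▸ mulVec_sumElim_harmonicExtension_comp_inl hinv y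
  have hsplit : Sum.elim u y = Sum.elim x_U y + Sum.elim (u - x_U) 0 := by
    rw [← Sum.elim_add_add, add_sub_cancel, add_zero]
  rw [hsplit]
  refine hpsd.dotProduct_mulVec_le_of_dotProduct_mulVec_eq_zero ?_
  rw [sumElim_zero_dotProduct, hharmonic, dotProduct_zero]

/-- Classical harmonic extension minimizes the Dirichlet energy: with `Δ` symmetric
positive semidefinite and `Δ₁₁` invertible, `x_U = -Δ₁₁⁻¹ Δ₁₂ y` minimizes the
quadratic form among all vectors agreeing with `y` on the boundary. -/
theorem classical_harmonic_extension_minimizes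
    {α β : Type*} [Fintype α] [Fintype β] [DecidableEq α] [DecidableEq β]
    (Δ : Matrix (α ⊕ β) (α ⊕ β) ℝ) (hsymm : Δ.IsSymm) (hpsd : Δ.PosSemidef)
    (hinv : IsUnit (Δ.toBlocks₁₁).det)
    (y : β → ℝ) (x_U : α → ℝ)
    (hxU : x_U = -((Δ.toBlocks₁₁)⁻¹.mulVec ((Δ.toBlocks₁₂).mulVec y))) :
    ∀ u : α → ℝ,
      (Sum.elim x_U y) ⬝ᵥ Δ.mulVec (Sum.elim x_U y)
        ≤ (Sum.elim u y) ⬝ᵥ Δ.mulVec (Sum.elim u y) :=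
  classical_harmonic_extension_minimizes_general Δ hpsd hinv y x_U hxU
end

section
/- Let Δ : Matrix (α ⊕ β) (α ⊕ β) ℝ be symmetric and positive semidefinite, fix y : β → ℝ, and let w : (α ⊕ β) → ℝ satisfy w ∘ Sum.inr = y. Then w minimizes the Dirichlet energy over all vectors with boundary values y (i.e., w ⬝ᵥ Δ.mulVec w ≤ v ⬝ᵥ Δ.mulVec v for every v with v ∘ Sum.inr = y) if and only if (Δ.mulVec w) ∘ Sum.inl = 0. (Energy minimization with fixed boundary is equivalent to harmonicity on the interior.) -/
open Matrix

private lemma quad_aux {c d : ℝ} (hd : 0 ≤ d) (h : ∀ t : ℝ, 0 ≤ 2*t*c + t^2*d) :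
    c = 0 := by
  by_contra hc
  have h1 := h (-c / (d + 1))
  have hd1 : 0 < d + 1 := by linarith
  have hc2 : 0 < c^2 := by positivity
  rw [div_pow] at h1
  have h2 : 0 ≤ (2 * (-c / (d+1)) * c + (-c)^2/(d+1)^2 * d) * (d+1)^2 := by
    apply mul_nonneg h1; positivity
  have : (2 * (-c / (d+1)) * c + (-c)^2/(d+1)^2 * d) * (d+1)^2
      = -2*c^2*(d+1) + c^2*d := by field_simp
  rw [this] at h2
  nlinarith

/-- Energy minimization with fixed boundary is equivalent to harmonicity on the
interior: for `Δ` symmetric positive semidefinite and `w` with boundary values `y`,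
`w` minimizes the Dirichlet energy among vectors with boundary values `y` iff
`(Δ.mulVec w) ∘ Sum.inl = 0`. -/
theorem energy_minimization_iff_harmonic
    {α β : Type*} [Fintype α] [Fintype β]
    (Δ : Matrix (α ⊕ β) (α ⊕ β) ℝ) (hsymm : Δ.IsSymm) (hpsd : Δ.PosSemidef)
    (y : β → ℝ) (w : (α ⊕ β) → ℝ) (hw : w ∘ Sum.inr = y) :
    (∀ v : (α ⊕ β) → ℝ, v ∘ Sum.inr = y →
        w ⬝ᵥ Δ.mulVec w ≤ v ⬝ᵥ Δ.mulVec v) ↔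
      (Δ.mulVec w) ∘ Sum.inl = 0 := by
  classical
  have hsw : ∀ u : (α ⊕ β) → ℝ, w ⬝ᵥ Δ.mulVec u = u ⬝ᵥ Δ.mulVec w := by
    intro u
    rw [dotProduct_mulVec, ← Matrix.mulVec_transpose, hsymm.eq, dotProduct_comm]
  have key : ∀ u : (α ⊕ β) → ℝ, (w + u) ⬝ᵥ Δ.mulVec (w + u)
      = w ⬝ᵥ Δ.mulVec w + 2*(u ⬝ᵥ Δ.mulVec w) + u ⬝ᵥ Δ.mulVec u := by
    intro u
    rw [Matrix.mulVec_add, add_dotProduct, dotProduct_add, dotProduct_add, hsw u]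
    ring
  have hpos : ∀ x : (α ⊕ β) → ℝ, 0 ≤ x ⬝ᵥ Δ.mulVec x := by
    intro x
    have := hpsd.dotProduct_mulVec_nonneg x
    simpa using this
  constructor
  · intro hmin
    funext a
    simp only [Function.comp_apply, Pi.zero_apply]
    set e : (α ⊕ β) → ℝ := Pi.single (Sum.inl a) 1 with he
    have hes : ∀ x : (α ⊕ β) → ℝ, e ⬝ᵥ x = x (Sum.inl a) := by
      intro x
      simp [he, dotProduct, Pi.single_apply]
    apply quad_aux (hpos e)
    intro t
    have hv : (w + t • e) ∘ Sum.inr = y := by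
      funext b
      have : e (Sum.inr b) = 0 := by
        simp [he, Pi.single_apply]
      simp [this, ← hw]
    have := hmin (w + t • e) hv
    rw [key (t • e)] at this
    have h1 : (t • e) ⬝ᵥ Δ.mulVec w = t * Δ.mulVec w (Sum.inl a) := by
      rw [smul_dotProduct, hes]; rfl
    have h2 : (t • e) ⬝ᵥ Δ.mulVec (t • e) = t^2 * (e ⬝ᵥ Δ.mulVec e) := by
      rw [Matrix.mulVec_smul, smul_dotProduct, dotProduct_smul]
      simp [smul_eq_mul]; ring
    rw [h1, h2] at this
    nlinarith [this]
  · intro hharm v hv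
    have hu : v = w + (v - w) := by ring
    rw [hu, key (v - w)]
    have hzero : (v - w) ⬝ᵥ Δ.mulVec w = 0 := by
      rw [dotProduct]
      apply Finset.sum_eq_zero
      intro i _
      cases i with
      | inl a =>
          have : Δ.mulVec w (Sum.inl a) = 0 := congrFun hharm a
          simp [this]
      | inr b =>
          have : v (Sum.inr b) = w (Sum.inr b) := by
            have h1 := congrFun hv b
            have h2 := congrFun hw b
            simp only [Function.comp_apply] at h1 h2
            rw [h1, h2]
          simp [Pi.sub_apply, this]
    rw [hzero]
    have := hpos (v - w)
    linarith
end

section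
/- Let Δ : Matrix (α ⊕ β) (α ⊕ β) ℝ be symmetric and positive semidefinite with the block Δ₁₁ positive definite, and let S = Δ₂₂ − Δ₂₁ * Δ₁₁⁻¹ * Δ₁₂ be the Schur complement of Δ₁₁ in Δ. Then for every x_B : β → ℝ and every x_U : α → ℝ, x_B ⬝ᵥ S.mulVec x_B ≤ (Sum.elim x_U x_B) ⬝ᵥ Δ.mulVec (Sum.elim x_U x_B), with equality when x_U = -Δ₁₁⁻¹.mulVec (Δ₁₂.mulVec x_B). Hence the minimum of the Dirichlet energy over all interior completions of x_B equals the Schur complement quadratic form x_Bᵀ(Δ/Δ[U,U])x_B. (Kron reduction: the Schur complement gives the optimal energy after eliminating the unknown interior nodes.) -/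
open Matrix

/-- Kron reduction: the Schur complement `S = Δ₂₂ − Δ₂₁ Δ₁₁⁻¹ Δ₁₂` gives the optimal
Dirichlet energy after eliminating the unknown interior nodes:
`x_Bᵀ S x_B ≤ (x_U, x_B)ᵀ Δ (x_U, x_B)` for all interior completions `x_U`, with
equality at the harmonic extension `x_U = -Δ₁₁⁻¹ Δ₁₂ x_B`. -/
theorem schur_complement_kron_reduction
    {α β : Type*} [Fintype α] [Fintype β] [DecidableEq α] [DecidableEq β]
    (Δ : Matrix (α ⊕ β) (α ⊕ β) ℝ) (hsymm : Δ.IsSymm) (hpsd : Δ.PosSemidef)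
    (hpd : (Δ.toBlocks₁₁).PosDef)
    (S : Matrix β β ℝ)
    (hS : S = Δ.toBlocks₂₂ - Δ.toBlocks₂₁ * (Δ.toBlocks₁₁)⁻¹ * Δ.toBlocks₁₂) :
    (∀ (x_B : β → ℝ) (x_U : α → ℝ),
        x_B ⬝ᵥ S.mulVec x_B
          ≤ (Sum.elim x_U x_B) ⬝ᵥ Δ.mulVec (Sum.elim x_U x_B)) ∧
    (∀ x_B : β → ℝ,
      ∀ x_U : α → ℝ,
        x_U = -((Δ.toBlocks₁₁)⁻¹.mulVec ((Δ.toBlocks₁₂).mulVec x_B)) →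
          x_B ⬝ᵥ S.mulVec x_B
            = (Sum.elim x_U x_B) ⬝ᵥ Δ.mulVec (Sum.elim x_U x_B)) := by
  set A := Δ.toBlocks₁₁ with hA
  set B := Δ.toBlocks₁₂ with hB
  haveI : Invertible A := hpd.isUnit.invertible
  have h21 : Δ.toBlocks₂₁ = Bᴴ := by
    ext i j
    have := congrFun (congrFun hsymm.eq (Sum.inr i)) (Sum.inl j)
    simpa [hB, conjTranspose_apply, toBlocks₂₁, toBlocks₁₂, transpose_apply] using this.symm
  have hΔ : Δ = fromBlocks A B Bᴴ Δ.toBlocks₂₂ := by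
    rw [← h21, hA, hB, fromBlocks_toBlocks]
  have key : ∀ (x_B : β → ℝ) (x_U : α → ℝ),
      (Sum.elim x_U x_B) ⬝ᵥ Δ.mulVec (Sum.elim x_U x_B) =
        (x_U + (A⁻¹ * B) *ᵥ x_B) ⬝ᵥ A.mulVec (x_U + (A⁻¹ * B) *ᵥ x_B) +
          x_B ⬝ᵥ S.mulVec x_B := by
    intro x_B x_U
    have := schur_complement_eq₁₁ (A := A) B Δ.toBlocks₂₂ x_U x_B hpd.1
    simp only [star_trivial] at this
    rw [hΔ, dotProduct_mulVec, this, ← dotProduct_mulVec, ← dotProduct_mulVec, hS, h21]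
  constructor
  · intro x_B x_U
    rw [key x_B x_U]
    have := hpd.posSemidef.dotProduct_mulVec_nonneg (x_U + (A⁻¹ * B) *ᵥ x_B)
    simp only [star_trivial] at this
    rw [dotProduct_mulVec]
    linarith [this]
  · intro x_B x_U hx
    rw [key x_B x_U]
    have h0 : x_U + (A⁻¹ * B) *ᵥ x_B = 0 := by
      rw [hx, ← mulVec_mulVec]; simp
    rw [h0]
    simp
end

section
/- Let δ : Matrix ε (α ⊕ β) ℝ, r : ε → ℝ, Δ = δᵀ * δ with Δ₁₁ invertible, and let δ_U = δ.submatrix id Sum.inl and δ_B = δ.submatrix id Sum.inr be the interior and boundary column blocks of δ, and S = Δ₂₂ − Δ₂₁ * Δ₁₁⁻¹ * Δ₁₂ the Schur complement. Then for every x_B : β → ℝ, the minimum over x_U : α → ℝ of E(Sum.elim x_U x_B) = ‖δ.mulVec (Sum.elim x_U x_B) − r‖² exists and equals x_B ⬝ᵥ S.mulVec x_B − 2 * (r ⬝ᵥ (δ_B − δ_U * Δ₁₁⁻¹ * Δ₁₂).mulVec x_B) + (r ⬝ᵥ r − ((δ_U)ᵀ.mulVec r) ⬝ᵥ Δ₁₁⁻¹.mulVec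 ((δ_U)ᵀ.mulVec r)), the last term being a constant independent of x_B. (Closed-form optimal energy for scoring functions with translational relation components, used for logical query reasoning.) -/
open Matrix BigOperators

private lemma dp_mv_move {m n : Type*} [Fintype m] [Fintype n]
    (u : m → ℝ) (M : Matrix m n ℝ) (v : n → ℝ) :
    u ⬝ᵥ M.mulVec v = Mᵀ.mulVec u ⬝ᵥ v := by
  rw [Matrix.dotProduct_mulVec, Matrix.mulVec_transpose]

/-- Closed-form optimal energy for scoring functions with translational relation
components, used for logical query reasoning: the minimum over interior completions
`x_U` of the generalized Dirichlet energy exists and equals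
`x_Bᵀ S x_B − 2 rᵀ(δ_B − δ_U Δ₁₁⁻¹ Δ₁₂) x_B + (rᵀr − (δ_Uᵀ r)ᵀ Δ₁₁⁻¹ (δ_Uᵀ r))`. -/
theorem translational_optimal_energy_closed_form
    {α β ε : Type*} [Fintype α] [Fintype β] [Fintype ε]
    [DecidableEq α] [DecidableEq β]
    (δ : Matrix ε (α ⊕ β) ℝ) (r : ε → ℝ)
    (Δ : Matrix (α ⊕ β) (α ⊕ β) ℝ) (hΔ : Δ = δᵀ * δ)
    (hinv : IsUnit (Δ.toBlocks₁₁).det)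
    (δU : Matrix ε α ℝ) (hδU : δU = δ.submatrix id Sum.inl)
    (δB : Matrix ε β ℝ) (hδB : δB = δ.submatrix id Sum.inr)
    (S : Matrix β β ℝ)
    (hS : S = Δ.toBlocks₂₂ - Δ.toBlocks₂₁ * (Δ.toBlocks₁₁)⁻¹ * Δ.toBlocks₁₂)
    (x_B : β → ℝ) :
    IsLeast
      (Set.range fun x_U : α → ℝ =>
        ∑ e, ((δ.mulVec (Sum.elim x_U x_B)) e - r e) ^ 2)
      (x_B ⬝ᵥ S.mulVec x_B
        - 2 * (r ⬝ᵥ (δB - δU * (Δ.toBlocks₁₁)⁻¹ * Δ.toBlocks₁₂).mulVec x_B)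
        + (r ⬝ᵥ r
            - (δUᵀ.mulVec r) ⬝ᵥ (Δ.toBlocks₁₁)⁻¹.mulVec (δUᵀ.mulVec r))) := by
  -- block identities
  have hA : Δ.toBlocks₁₁ = δUᵀ * δU := by
    subst hΔ hδU; ext i j
    simp [Matrix.toBlocks₁₁, Matrix.mul_apply]
  have h12 : Δ.toBlocks₁₂ = δUᵀ * δB := by
    subst hΔ hδU hδB; ext i j
    simp [Matrix.toBlocks₁₂, Matrix.mul_apply]
  have h21 : Δ.toBlocks₂₁ = δBᵀ * δU := by
    subst hΔ hδU hδB; ext i j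
    simp [Matrix.toBlocks₂₁, Matrix.mul_apply]
  have h22 : Δ.toBlocks₂₂ = δBᵀ * δB := by
    subst hΔ hδB; ext i j
    simp [Matrix.toBlocks₂₂, Matrix.mul_apply]
  set A := Δ.toBlocks₁₁ with hAdef
  set N := A⁻¹ with hNdef
  have hAT : Aᵀ = A := by rw [hA, Matrix.transpose_mul, Matrix.transpose_transpose]
  have hNT : Nᵀ = N := by rw [hNdef, Matrix.transpose_nonsing_inv, hAT]
  have hAN : A * N = 1 := Matrix.mul_nonsing_inv _ hinv
  have hsplit : ∀ u : α → ℝ, δ.mulVec (Sum.elim u x_B) = δU.mulVec u + δB.mulVec x_B := by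
    intro u; subst hδU hδB; ext e
    simp [Matrix.mulVec, dotProduct, Fintype.sum_sum_type]
  set c : ε → ℝ := r - δB.mulVec x_B with hc
  set a : α → ℝ := δUᵀ.mulVec c with ha
  set xstar : α → ℝ := N.mulVec a with hxstar
  have horth : δUᵀ.mulVec (δU.mulVec xstar - c) = 0 := by
    rw [Matrix.mulVec_sub, hxstar, Matrix.mulVec_mulVec, Matrix.mulVec_mulVec,
      ← hA, hAN, Matrix.one_mulVec, sub_self]
  have henergy : ∀ u : α → ℝ,
      (∑ e, ((δ.mulVec (Sum.elim u x_B)) e - r e) ^ 2)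
        = (δU.mulVec u - c) ⬝ᵥ (δU.mulVec u - c) := by
    intro u
    simp only [dotProduct, hsplit u, hc, Pi.sub_apply, Pi.add_apply]
    exact Finset.sum_congr rfl fun e _ => by ring
  have hperp : ∀ z : α → ℝ, (δU.mulVec z) ⬝ᵥ (δU.mulVec xstar - c) = 0 := by
    intro z
    rw [dotProduct_comm, dp_mv_move, horth, zero_dotProduct]
  have hdecomp : ∀ u : α → ℝ,
      (δU.mulVec u - c) ⬝ᵥ (δU.mulVec u - c)
        = (δU.mulVec (u - xstar)) ⬝ᵥ (δU.mulVec (u - xstar))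
          + (δU.mulVec xstar - c) ⬝ᵥ (δU.mulVec xstar - c) := by
    intro u
    have h1 : δU.mulVec u - c = δU.mulVec (u - xstar) + (δU.mulVec xstar - c) := by
      rw [Matrix.mulVec_sub]; abel
    have h2 := hperp (u - xstar)
    have h2' : (δU.mulVec xstar - c) ⬝ᵥ (δU.mulVec (u - xstar)) = 0 := by
      rw [dotProduct_comm]; exact h2
    rw [h1, add_dotProduct, dotProduct_add, dotProduct_add, h2, h2']
    ring
  have hval : (δU.mulVec xstar - c) ⬝ᵥ (δU.mulVec xstar - c)
      = c ⬝ᵥ c - a ⬝ᵥ N.mulVec a := by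
    rw [sub_dotProduct, hperp xstar, zero_sub, dotProduct_sub,
      dp_mv_move c δU xstar, ← ha, hxstar]
    ring
  have hfinal : c ⬝ᵥ c - a ⬝ᵥ N.mulVec a
      = x_B ⬝ᵥ S.mulVec x_B
        - 2 * (r ⬝ᵥ (δB - δU * N * Δ.toBlocks₁₂).mulVec x_B)
        + (r ⬝ᵥ r - (δUᵀ.mulVec r) ⬝ᵥ N.mulVec (δUᵀ.mulVec r)) := by
    rw [hS, h12, h21, h22]
    have e1 : δB.mulVec x_B ⬝ᵥ r = δBᵀ.mulVec r ⬝ᵥ x_B := by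
      rw [dotProduct_comm, dp_mv_move]
    have e2 : δU.mulVec (N.mulVec (δUᵀ.mulVec (δB.mulVec x_B))) ⬝ᵥ r
        = δBᵀ.mulVec (δU.mulVec (N.mulVec (δUᵀ.mulVec r))) ⬝ᵥ x_B := by
      rw [dotProduct_comm]
      simp only [dp_mv_move, Matrix.transpose_transpose, hNT]
    simp only [ha, hc]
    simp only [Matrix.sub_mulVec, Matrix.mulVec_sub, ← Matrix.mulVec_mulVec,
      dotProduct_sub, sub_dotProduct, dp_mv_move,
      Matrix.transpose_transpose, hNT]
    rw [e1, e2]; ring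
  constructor
  · refine ⟨xstar, ?_⟩
    show (∑ e, ((δ.mulVec (Sum.elim xstar x_B)) e - r e) ^ 2) = _
    rw [henergy, hdecomp xstar, sub_self, Matrix.mulVec_zero, zero_dotProduct,
      zero_add, hval, hfinal]
  · rintro y ⟨u, rfl⟩
    show _ ≤ (∑ e, ((δ.mulVec (Sum.elim u x_B)) e - r e) ^ 2)
    rw [henergy u, hdecomp u]
    have hnn : (0:ℝ) ≤ δU.mulVec (u - xstar) ⬝ᵥ δU.mulVec (u - xstar) :=
      Finset.sum_nonneg fun i _ => mul_self_nonneg _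
    linarith [hval, hfinal]
end
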